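/- For any two multigraphons h1, h2 and any multigraph F on k vertices with adjacency matrix (a_{ij}), the homomorphism densities satisfy |t_F(h1) - t_F(h2)| ≤ Σ_{1≤i<j≤k} ∫_{[0,1]²} |h1^{≥a_{ij}}(x,y) - h2^{≥a_{ij}}(x,y)| dx dy + Σ_{1≤i≤k} ∫_{[0,1]} |h1^{≥a_{ii}}(x,x) - h2^{≥a_{ii}}(x,x)| dx, where h^{≥r}(x,y) = Σ_{s≥r} h(s;x,y). -/

import Mathlib

/-!
The integrand of `t_F(h)` is a product over the pairs `i ≤ j` of factors with values in `[0,1]`,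
and for such products telescoping gives `|∏ fₚ - ∏ gₚ| ≤ ∑ |fₚ - gₚ|` pointwise. Integrating
over `[0,1]ᵏ`, the factor of a pair `i < j` depends only on `(xᵢ, xⱼ)`, whose law under the
product measure is the uniform measure on `[0,1]²` by independence of the coordinates, while the
factor of a loop `(i, i)` depends only on `xᵢ`, which is uniform on `[0,1]`.
-/

open MeasureTheory Set

/-- The uniform measure on `[0,1]`. -/
noncomputable def unif : Measure ℝ := volume.restrict (Icc (0:ℝ) 1)

/-- `h` is a multigraphon. -/
def IsMultigraphon (h : ℕ → ℝ → ℝ → ℝ) : Prop :=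
  (∀ r, Measurable fun p : ℝ × ℝ => h r p.1 p.2) ∧
  (∀ r, Integrable (fun p : ℝ × ℝ => h r p.1 p.2) (unif.prod unif)) ∧
  (∀ r, Integrable (fun x : ℝ => h r x x) unif) ∧
  (∀ r x y, 0 ≤ h r x y ∧ h r x y ≤ 1) ∧
  (∀ r x y, h r x y = h r y x) ∧
  (∀ x y, ∑' r : ℕ, h r x y = 1) ∧
  (∀ r x, h (2 * r + 1) x x = 0)

/-- Tail sum `h^{≥ r}(x,y) = ∑_{s ≥ r} h(s;x,y)`. -/
noncomputable def tailSum (h : ℕ → ℝ → ℝ → ℝ) (r : ℕ) (x y : ℝ) : ℝ :=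
  ∑' s : ℕ, if r ≤ s then h s x y else 0

/-- Homomorphism density of the multigraph with adjacency matrix `a` in the
multigraphon `h`. -/
noncomputable def tDensity {k : ℕ} (a : Fin k → Fin k → ℕ) (h : ℕ → ℝ → ℝ → ℝ) : ℝ :=
  ∫ x : Fin k → ℝ,
    (∏ i, ∏ j, if i ≤ j then tailSum h (a i j) (x i) (x j) else 1)
      ∂(Measure.pi fun _ : Fin k => unif)

open ProbabilityTheory Finset

instance : IsProbabilityMeasure unif :=
  ⟨by simp [unif, Real.volume_Icc]⟩

theorem Finset.abs_prod_sub_prod_le_sum_abs_sub {ι : Type*} (s : Finset ι) {f g : ι → ℝ}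
    (hf : ∀ i ∈ s, |f i| ≤ 1) (hg : ∀ i ∈ s, |g i| ≤ 1) :
    |∏ i ∈ s, f i - ∏ i ∈ s, g i| ≤ ∑ i ∈ s, |f i - g i| := by
  classical
  induction s using Finset.induction with
  | empty => simp
  | insert a t ha ih =>
    simp only [Finset.forall_mem_insert] at hf hg
    rw [prod_insert ha, prod_insert ha, sum_insert ha]
    have hprod : |∏ i ∈ t, f i| ≤ 1 := by
      rw [abs_prod]; exact prod_le_one (fun i _ => abs_nonneg _) hf.2
    calc |f a * ∏ i ∈ t, f i - g a * ∏ i ∈ t, g i|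
        = |(f a - g a) * ∏ i ∈ t, f i + g a * (∏ i ∈ t, f i - ∏ i ∈ t, g i)| := by
          congr 1; ring
      _ ≤ |f a - g a| * |∏ i ∈ t, f i| + |g a| * |∏ i ∈ t, f i - ∏ i ∈ t, g i| := by
        rw [← abs_mul, ← abs_mul]; exact abs_add_le _ _
      _ ≤ |f a - g a| * 1 + 1 * ∑ i ∈ t, |f i - g i| := by
        gcongr
        exacts [hg.1, ih hf.2 hg.2]
      _ = |f a - g a| + ∑ i ∈ t, |f i - g i| := by ring

theorem MeasureTheory.abs_integral_prod_sub_integral_prod_le {Ω ι : Type*} [MeasurableSpace Ω]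
    {μ : Measure Ω} [IsFiniteMeasure μ] (s : Finset ι) {f g : ι → Ω → ℝ}
    (hf : ∀ i ∈ s, AEStronglyMeasurable (f i) μ) (hg : ∀ i ∈ s, AEStronglyMeasurable (g i) μ)
    (hf1 : ∀ i ∈ s, ∀ ω, |f i ω| ≤ 1) (hg1 : ∀ i ∈ s, ∀ ω, |g i ω| ≤ 1) :
    |∫ ω, ∏ i ∈ s, f i ω ∂μ - ∫ ω, ∏ i ∈ s, g i ω ∂μ| ≤ ∑ i ∈ s, ∫ ω, |f i ω - g i ω| ∂μ := by
  have bounded_integrable {u : Ω → ℝ} (hu : AEStronglyMeasurable u μ) (C : ℝ)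
      (huC : ∀ ω, |u ω| ≤ C) : Integrable u μ :=
    .of_bound hu C (.of_forall huC)
  have hF := bounded_integrable (s.aestronglyMeasurable_fun_prod hf) 1 fun ω => by
    rw [abs_prod]; exact prod_le_one (fun i _ => abs_nonneg _) fun i hi => hf1 i hi ω
  have hG := bounded_integrable (s.aestronglyMeasurable_fun_prod hg) 1 fun ω => by
    rw [abs_prod]; exact prod_le_one (fun i _ => abs_nonneg _) fun i hi => hg1 i hi ω
  have hD : ∀ i ∈ s, Integrable (fun ω => |f i ω - g i ω|) μ := fun i hi =>
    bounded_integrable ((hf i hi).sub (hg i hi)).norm 2 fun ω => by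
      rw [abs_abs]
      linarith [abs_sub (f i ω) (g i ω), hf1 i hi ω, hg1 i hi ω]
  calc |∫ ω, ∏ i ∈ s, f i ω ∂μ - ∫ ω, ∏ i ∈ s, g i ω ∂μ|
      = |∫ ω, (∏ i ∈ s, f i ω - ∏ i ∈ s, g i ω) ∂μ| := by rw [integral_sub hF hG]
    _ ≤ ∫ ω, |∏ i ∈ s, f i ω - ∏ i ∈ s, g i ω| ∂μ := abs_integral_le_integral_abs
    _ ≤ ∫ ω, ∑ i ∈ s, |f i ω - g i ω| ∂μ :=
      integral_mono (hF.sub hG).abs (integrable_finsetSum s hD) fun ω =>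
        s.abs_prod_sub_prod_le_sum_abs_sub (fun i hi => hf1 i hi ω) (fun i hi => hg1 i hi ω)
    _ = ∑ i ∈ s, ∫ ω, |f i ω - g i ω| ∂μ := integral_finsetSum s hD

section PiMarginals

variable {ι α E : Type*} [Fintype ι] [MeasurableSpace α] [NormedAddCommGroup E] [NormedSpace ℝ E]
  {μ : ι → Measure α} [∀ i, IsProbabilityMeasure (μ i)]

theorem MeasureTheory.measurePreserving_eval_pair {i j : ι} (hij : i ≠ j) :
    MeasurePreserving (fun x : ι → α => (x i, x j)) (Measure.pi μ) ((μ i).prod (μ j)) := by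
  refine ⟨by fun_prop, ?_⟩
  have hindep : (fun x : ι → α => x i) ⟂ᵢ[Measure.pi μ] fun x => x j :=
    (iIndepFun_pi (μ := μ) (X := fun _ => id) fun _ => aemeasurable_id).indepFun hij
  rw [hindep.map_prod_eq_prod_map_map (measurable_pi_apply i).aemeasurable
      (measurable_pi_apply j).aemeasurable,
    (measurePreserving_eval μ i).map_eq, (measurePreserving_eval μ j).map_eq]

theorem MeasureTheory.integral_comp_eval_pair {i j : ι} (hij : i ≠ j) {f : α × α → E}
    (hf : AEStronglyMeasurable f ((μ i).prod (μ j))) :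
    ∫ x : ι → α, f (x i, x j) ∂Measure.pi μ = ∫ p, f p ∂(μ i).prod (μ j) := by
  rw [← (measurePreserving_eval_pair hij).map_eq, integral_map (by fun_prop)]
  rwa [(measurePreserving_eval_pair (μ := μ) hij).map_eq]

end PiMarginals

theorem IsMultigraphon.hasSum {h : ℕ → ℝ → ℝ → ℝ} (hh : IsMultigraphon h) (x y : ℝ) :
    HasSum (fun r => h r x y) 1 := by
  obtain ⟨-, -, -, -, -, hsum, -⟩ := hh
  have hs : Summable fun r => h r x y := by
    -- a non-summable `tsum` is `0`, not `1`
    by_contra hc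
    simpa [tsum_eq_zero_of_not_summable hc] using hsum x y
  exact hsum x y ▸ hs.hasSum

theorem IsMultigraphon.tailSum_eq_one_sub_sum {h : ℕ → ℝ → ℝ → ℝ} (hh : IsMultigraphon h)
    (r : ℕ) (x y : ℝ) : tailSum h r x y = 1 - ∑ s ∈ range r, h s x y := by
  have hhead : HasSum (fun s => if s < r then h s x y else 0) (∑ s ∈ range r, h s x y) := by
    rw [← sum_congr rfl fun s hs => if_pos (mem_range.1 hs)]
    exact hasSum_sum_of_ne_finset_zero fun s hs => if_neg (mem_range.not.1 hs)
  rw [tailSum, ← ((hh.hasSum x y).sub hhead).tsum_eq]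
  exact tsum_congr fun s => by simp only [← not_lt]; split_ifs <;> ring

theorem IsMultigraphon.nonneg {h : ℕ → ℝ → ℝ → ℝ} (hh : IsMultigraphon h) (r : ℕ) (x y : ℝ) :
    0 ≤ h r x y :=
  (hh.2.2.2.1 r x y).1

theorem IsMultigraphon.abs_tailSum_le_one {h : ℕ → ℝ → ℝ → ℝ} (hh : IsMultigraphon h)
    (r : ℕ) (x y : ℝ) : |tailSum h r x y| ≤ 1 := by
  rw [abs_of_nonneg (tsum_nonneg fun s => by split_ifs; exacts [hh.nonneg s x y, le_rfl]),
    hh.tailSum_eq_one_sub_sum]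
  exact sub_le_self _ (sum_nonneg fun s _ => hh.nonneg s x y)

theorem IsMultigraphon.measurable_tailSum {h : ℕ → ℝ → ℝ → ℝ} (hh : IsMultigraphon h) (r : ℕ) :
    Measurable fun p : ℝ × ℝ => tailSum h r p.1 p.2 := by
  simp_rw [hh.tailSum_eq_one_sub_sum]
  exact measurable_const.sub (Finset.measurable_sum _ fun s _ => hh.1 s)

section Density

variable {k : ℕ} (a : Fin k → Fin k → ℕ)

noncomputable def edgeFactor (h : ℕ → ℝ → ℝ → ℝ) (p : Fin k × Fin k) (x : Fin k → ℝ) : ℝ :=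
  if p.1 ≤ p.2 then tailSum h (a p.1 p.2) (x p.1) (x p.2) else 1

theorem tDensity_eq_integral_prod_edgeFactor (h : ℕ → ℝ → ℝ → ℝ) :
    tDensity a h = ∫ x, ∏ p, edgeFactor a h p x ∂Measure.pi fun _ : Fin k => unif := by
  simp only [tDensity, edgeFactor, Fintype.prod_prod_type]

variable {a}

theorem IsMultigraphon.abs_edgeFactor_le_one {h : ℕ → ℝ → ℝ → ℝ} (hh : IsMultigraphon h)
    (p : Fin k × Fin k) (x : Fin k → ℝ) : |edgeFactor a h p x| ≤ 1 := by
  unfold edgeFactor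
  split_ifs
  exacts [hh.abs_tailSum_le_one _ _ _, abs_one.le]

theorem IsMultigraphon.measurable_edgeFactor {h : ℕ → ℝ → ℝ → ℝ} (hh : IsMultigraphon h)
    (p : Fin k × Fin k) : Measurable (edgeFactor a h p) := by
  unfold edgeFactor
  split_ifs
  · have hpair : Measurable fun x : Fin k → ℝ => (x p.1, x p.2) := by fun_prop
    exact (hh.measurable_tailSum _).comp hpair
  · exact measurable_const

theorem integral_abs_edgeFactor_sub {h1 h2 : ℕ → ℝ → ℝ → ℝ} (hh1 : IsMultigraphon h1)
    (hh2 : IsMultigraphon h2) (i j : Fin k) :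
    ∫ x, |edgeFactor a h1 (i, j) x - edgeFactor a h2 (i, j) x| ∂Measure.pi (fun _ => unif) =
      (if i < j then
          ∫ p : ℝ × ℝ, |tailSum h1 (a i j) p.1 p.2 - tailSum h2 (a i j) p.1 p.2|
            ∂(unif.prod unif) else 0) +
      (if i = j then ∫ x : ℝ, |tailSum h1 (a i i) x x - tailSum h2 (a i i) x x| ∂unif else 0) := by
  have hdiff : Measurable fun p : ℝ × ℝ =>
      |tailSum h1 (a i j) p.1 p.2 - tailSum h2 (a i j) p.1 p.2| :=
    ((hh1.measurable_tailSum _).sub (hh2.measurable_tailSum _)).abs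
  rcases lt_trichotomy i j with hlt | rfl | hgt
  · simp only [edgeFactor, if_pos hlt.le, if_pos hlt, if_neg hlt.ne, add_zero]
    exact integral_comp_eval_pair hlt.ne hdiff.aestronglyMeasurable
  · simp only [edgeFactor, le_refl, if_true, lt_irrefl, if_false, zero_add]
    have hdiag : Measurable fun y : ℝ => |tailSum h1 (a i i) y y - tailSum h2 (a i i) y y| :=
      hdiff.comp (measurable_id.prodMk measurable_id)
    exact integral_comp_eval (μ := fun _ => unif) hdiag.aestronglyMeasurable
  · simp [edgeFactor, hgt.not_ge, hgt.not_gt, hgt.ne']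

end Density

theorem stmt_1 {k : ℕ} (a : Fin k → Fin k → ℕ)
    (h1 h2 : ℕ → ℝ → ℝ → ℝ) (hh1 : IsMultigraphon h1) (hh2 : IsMultigraphon h2) :
    |tDensity a h1 - tDensity a h2| ≤
      (∑ i : Fin k, ∑ j : Fin k, if i < j then
          ∫ p : ℝ × ℝ, |tailSum h1 (a i j) p.1 p.2 - tailSum h2 (a i j) p.1 p.2|
            ∂(unif.prod unif) else 0) +
      ∑ i : Fin k, ∫ x : ℝ, |tailSum h1 (a i i) x x - tailSum h2 (a i i) x x| ∂unif := by
  calc |tDensity a h1 - tDensity a h2|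
      ≤ ∑ p, ∫ x, |edgeFactor a h1 p x - edgeFactor a h2 p x| ∂Measure.pi (fun _ => unif) := by
        rw [tDensity_eq_integral_prod_edgeFactor, tDensity_eq_integral_prod_edgeFactor]
        exact abs_integral_prod_sub_integral_prod_le univ
          (fun p _ => (hh1.measurable_edgeFactor p).aestronglyMeasurable)
          (fun p _ => (hh2.measurable_edgeFactor p).aestronglyMeasurable)
          (fun p _ => hh1.abs_edgeFactor_le_one p) (fun p _ => hh2.abs_edgeFactor_le_one p)
    _ = _ := by
        simp only [Fintype.sum_prod_type, integral_abs_edgeFactor_sub hh1 hh2, sum_add_distrib,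
          sum_ite_eq, Finset.mem_univ, if_true]
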